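/- Let R be an excellent semi-local integral domain of dimension 1 with field of fractions K, and let R̃ be the integral closure of R in K. Then there exists a nonzero element f in the Jacobson radical J_R of R such that for every i ≥ 1 one has 1 + f^{i+1}·R̃ ⊆ 1 + f^i·R. In particular, the subgroup topologies on K^× generated by the open subgroups {1 + f^i·R : i ≥ 1} and {1 + f^i·R̃ : i ≥ 1} coincide. -/

import Mathlib

/-! Take `f = c * g`, where `c ≠ 0` is a conductor element (`c • R̃ ⊆ R`, which exists because
`R̃` is a finitely generated `R`-submodule of `K`) and `g ≠ 0` lies in the Jacobson radical.
Then `f ^ (i + 1) • R̃ = f ^ i • g • (c • R̃) ⊆ f ^ i • R`. -/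

theorem Ideal.jacobson_bot_ne_bot_of_finite_maximalSpectrum {R : Type*} [CommRing R] [IsDomain R]
    [Finite (MaximalSpectrum R)] (hR : ¬IsField R) :
    (⊥ : Ideal R).jacobson ≠ ⊥ := by
  have : Fintype (MaximalSpectrum R) := Fintype.ofFinite _
  have hprod_le : ∏ m : MaximalSpectrum R, m.asIdeal ≤ (⊥ : Ideal R).jacobson :=
    le_sInf fun J hJ ↦ Ideal.prod_le_inf.trans
      (Finset.inf_le (Finset.mem_univ (⟨J, hJ.2⟩ : MaximalSpectrum R)))
  have hprod_ne : ∏ m : MaximalSpectrum R, m.asIdeal ≠ ⊥ :=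
    Finset.prod_ne_zero_iff.mpr fun m _ ↦ Ring.ne_bot_of_isMaximal_of_not_isField m.isMaximal hR
  exact ne_bot_of_le_ne_bot hprod_ne hprod_le

theorem stmt_0_general (R K : Type*) [CommRing R] [IsDomain R]
    [Field K] [Algebra R K] [IsFractionRing R K]
    (hdim : ringKrullDim R = 1)
    (hsemilocal : Finite (MaximalSpectrum R))
    (hfinite : Module.Finite R (integralClosure R K)) :
    ∃ f : R, f ≠ 0 ∧ f ∈ (⊥ : Ideal R).jacobson ∧
      (∀ i : ℕ, 1 ≤ i → ∀ x : K,
        (∃ y ∈ integralClosure R K, x = 1 + (algebraMap R K f) ^ (i + 1) * y) →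
        (∃ z : R, x = 1 + (algebraMap R K f) ^ i * algebraMap R K z)) ∧
      (∀ i : ℕ, 1 ≤ i → ∀ x : K,
        (∃ z : R, x = 1 + (algebraMap R K f) ^ i * algebraMap R K z) →
        (∃ y ∈ integralClosure R K, x = 1 + (algebraMap R K f) ^ i * y)) := by
  have hR : ¬IsField R := fun h ↦ by simp [ringKrullDim_eq_zero_of_isField h] at hdim
  obtain ⟨g, hgJ, hg0⟩ := Submodule.exists_mem_ne_zero_of_ne_bot
    (Ideal.jacobson_bot_ne_bot_of_finite_maximalSpectrum hR)
  obtain ⟨c, hc, hconductor⟩ := FractionalIdeal.isFractional_of_fg (S := nonZeroDivisors R)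
    (Module.Finite.iff_fg (N := Subalgebra.toSubmodule (integralClosure R K)) |>.mp hfinite)
  refine ⟨c * g, mul_ne_zero (nonZeroDivisors.ne_zero hc) hg0, Ideal.mul_mem_left _ _ hgJ, ?_, ?_⟩
  · rintro i - x ⟨y, hy, rfl⟩
    obtain ⟨a, ha⟩ := hconductor y hy
    refine ⟨g * a, ?_⟩
    rw [map_mul _ g a, ha, Algebra.smul_def, map_mul]
    ring
  · rintro i - x ⟨z, rfl⟩
    exact ⟨_, (integralClosure R K).algebraMap_mem z, rfl⟩

/-- Let `R` be an excellent (Noetherian, with finite normalization)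
semi-local integral domain of Krull dimension `1`, with fraction field `K` and
integral closure `R̃ = integralClosure R K`.  Then there is a nonzero element `f`
of the Jacobson radical of `R` such that `1 + f^(i+1)·R̃ ⊆ 1 + f^i·R` for all
`i ≥ 1`; in particular (since trivially `1 + f^i·R ⊆ 1 + f^i·R̃`), the subgroup
topologies on `K^×` generated by `{1 + f^i·R}` and `{1 + f^i·R̃}` coincide. -/
theorem stmt_0 (R K : Type*) [CommRing R] [IsDomain R] [IsNoetherianRing R]
    [Field K] [Algebra R K] [IsFractionRing R K]
    (hdim : ringKrullDim R = 1)
    (hsemilocal : Finite (MaximalSpectrum R))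
    (hfinite : Module.Finite R (integralClosure R K)) :
    ∃ f : R, f ≠ 0 ∧ f ∈ (⊥ : Ideal R).jacobson ∧
      (∀ i : ℕ, 1 ≤ i → ∀ x : K,
        (∃ y ∈ integralClosure R K, x = 1 + (algebraMap R K f) ^ (i + 1) * y) →
        (∃ z : R, x = 1 + (algebraMap R K f) ^ i * algebraMap R K z)) ∧
      (∀ i : ℕ, 1 ≤ i → ∀ x : K,
        (∃ z : R, x = 1 + (algebraMap R K f) ^ i * algebraMap R K z) →
        (∃ y ∈ integralClosure R K, x = 1 + (algebraMap R K f) ^ i * y)) :=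
  stmt_0_general R K hdim hsemilocal hfinite
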